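/- Assume (H1)–(H5), γ₁ − μ > L with μ > 0, εγ₂ < μ and κ_ε := L/(γ₁−μ) + εL/(μ−εγ₂) < 1, and let a, b be Borel measurable. For v̄₀ ∈ ℝᵐ let F^ε(v̄₀) denote the value û₀ of the ℝⁿ-component at time 0 of the unique solution in C⁻_{μ/ε}(ℝⁿ×ℝᵐ) of the integral system (★) with anchor v̄₀. Then for all v̄₀¹, v̄₀² ∈ ℝᵐ: |F^ε(v̄₀¹) − F^ε(v̄₀²)| ≤ [L/((γ₁−μ)(1−κ_ε))] · |v̄₀¹ − v̄₀²|; i.e., the manifold graph map is globally Lipschitz in the anchor. -/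

import Mathlib

/-!
Measure the distance of the two solutions in the weighted sup-norm
`S = sup_{t ≤ 0} e^{(μ/ε) t} (‖û¹_t - û²_t‖ + ‖v̂¹_t - v̂²_t‖)`, finite since both lie in
`C⁻_{μ/ε}`. Dissipativity of `A` gives `‖e^{sA}‖ ≤ e^{-γ₁ s}` for `s ≥ 0`, so the Lipschitz
bound on `U` yields `e^{(μ/ε) t} ‖û¹_t - û²_t‖ ≤ L/(γ₁-μ) · S`; the bound on `e^{tB}` for
`t ≤ 0` and that on `V` yield `e^{(μ/ε) t} ‖v̂¹_t - v̂²_t‖ ≤ ‖v̄₀¹ - v̄₀²‖ + εL/(μ-εγ₂) · S`.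
Hence `S ≤ ‖v̄₀¹ - v̄₀²‖ + κ_ε S`, i.e. `S ≤ ‖v̄₀¹ - v̄₀²‖ / (1 - κ_ε)`, and the first bound
at `t = 0` gives the claim.
-/

open scoped RealInnerProductSpace
open MeasureTheory

/-- `(û, v̂)` solves the integral system (★) on `(-∞, 0]` with input paths `a, b` and anchor `w`,
as an element of the weighted space `C⁻_{μ/ε}(ℝⁿ × ℝᵐ)` (continuity on `(-∞,0]` together with
finiteness of the weighted sup-norm `sup_{t ≤ 0} e^{(μ/ε) t} (‖û_t‖ + ‖v̂_t‖)`). -/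
def IsStarSolution (n m : ℕ) (ε μ : ℝ)
    (A : EuclideanSpace ℝ (Fin n) →L[ℝ] EuclideanSpace ℝ (Fin n))
    (B : EuclideanSpace ℝ (Fin m) →L[ℝ] EuclideanSpace ℝ (Fin m))
    (U : EuclideanSpace ℝ (Fin n) × EuclideanSpace ℝ (Fin m) → EuclideanSpace ℝ (Fin n))
    (V : EuclideanSpace ℝ (Fin n) × EuclideanSpace ℝ (Fin m) → EuclideanSpace ℝ (Fin m))
    (a : ℝ → EuclideanSpace ℝ (Fin n)) (b : ℝ → EuclideanSpace ℝ (Fin m))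
    (w : EuclideanSpace ℝ (Fin m))
    (uh : ℝ → EuclideanSpace ℝ (Fin n)) (vh : ℝ → EuclideanSpace ℝ (Fin m)) : Prop :=
  ContinuousOn uh (Set.Iic 0) ∧ ContinuousOn vh (Set.Iic 0) ∧
  (∃ K : ℝ, ∀ t : ℝ, t ≤ 0 → Real.exp (μ / ε * t) * (‖uh t‖ + ‖vh t‖) ≤ K) ∧
  (∀ t : ℝ, t ≤ 0 →
    uh t = ∫ r in Set.Iic t,
      NormedSpace.exp (((t - r) / ε) • A) (ε⁻¹ • U (uh r + a r, vh r + b r))) ∧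
  (∀ t : ℝ, t ≤ 0 →
    vh t = NormedSpace.exp (t • B) w -
      ∫ r in t..0, NormedSpace.exp ((t - r) • B) (V (uh r + a r, vh r + b r)))

open Set Filter

section OperatorExp

variable {E : Type*} [NormedAddCommGroup E] [NormedSpace ℝ E] [CompleteSpace E]

theorem continuous_exp_smul (A : E →L[ℝ] E) :
    Continuous fun s : ℝ => NormedSpace.exp (s • A) :=
  continuous_iff_continuousAt.2 fun s => (hasDerivAt_exp_smul_const' (𝕂 := ℝ) A s).continuousAt

theorem hasDerivAt_exp_smul_apply (A : E →L[ℝ] E) (x : E) (u : ℝ) :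
    HasDerivAt (fun u : ℝ => NormedSpace.exp (u • A) x) (A (NormedSpace.exp (u • A) x)) u := by
  simpa using (hasDerivAt_exp_smul_const' (𝕂 := ℝ) A u).clm_apply (hasDerivAt_const u x)

end OperatorExp

section Dissipative

variable {E : Type*} [NormedAddCommGroup E] [InnerProductSpace ℝ E] [CompleteSpace E]
  {A : E →L[ℝ] E} {γ : ℝ}

theorem norm_exp_smul_apply_le_of_inner_le (hA : ∀ x, ⟪A x, x⟫ ≤ -γ * ‖x‖ ^ 2) {s : ℝ}
    (hs : 0 ≤ s) (x : E) : ‖NormedSpace.exp (s • A) x‖ ≤ Real.exp (-γ * s) * ‖x‖ := by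
  set y := fun u : ℝ => NormedSpace.exp (u • A) x
  -- Lyapunov function: `d/du ‖y u‖² = 2 ⟪A y, y⟫ ≤ -2γ ‖y u‖²`.
  have hanti : Antitone fun u => Real.exp (2 * γ * u) * ‖y u‖ ^ 2 := by
    refine antitone_of_hasDerivAt_nonpos (f' := fun u =>
      Real.exp (2 * γ * u) * (2 * γ) * ‖y u‖ ^ 2 + Real.exp (2 * γ * u) * (2 * ⟪y u, A (y u)⟫))
      (fun u => ?_) fun u => ?_
    · have he : HasDerivAt (fun u => Real.exp (2 * γ * u))
          (Real.exp (2 * γ * u) * (2 * γ)) u := by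
        simpa using ((hasDerivAt_id u).const_mul (2 * γ)).exp
      exact he.mul (hasDerivAt_exp_smul_apply A x u).norm_sq
    · have := mul_le_mul_of_nonneg_left (hA (y u)) (Real.exp_pos (2 * γ * u)).le
      dsimp only
      rw [real_inner_comm, Pi.zero_apply]
      nlinarith [Real.exp_pos (2 * γ * u)]
  have h := hanti hs
  simp only [y, zero_smul, NormedSpace.exp_zero, one_apply_eq_self, mul_zero,
    Real.exp_zero, one_mul] at h
  refine (pow_le_pow_iff_left₀ (norm_nonneg _) (by positivity) two_ne_zero).1 ?_
  calc ‖NormedSpace.exp (s • A) x‖ ^ 2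
      = Real.exp (-(2 * γ * s)) * (Real.exp (2 * γ * s) * ‖NormedSpace.exp (s • A) x‖ ^ 2) := by
        rw [← mul_assoc, ← Real.exp_add, neg_add_cancel, Real.exp_zero, one_mul]
    _ ≤ Real.exp (-(2 * γ * s)) * ‖x‖ ^ 2 := by gcongr
    _ = (Real.exp (-γ * s) * ‖x‖) ^ 2 := by rw [mul_pow, ← Real.exp_nat_mul]; ring_nf

end Dissipative

theorem integral_exp_mul_of_ne_zero {k : ℝ} (hk : k ≠ 0) (a b : ℝ) :
    ∫ r in a..b, Real.exp (k * r) = (Real.exp (k * b) - Real.exp (k * a)) / k := by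
  rw [intervalIntegral.integral_comp_mul_left (fun x => Real.exp x) hk, integral_exp,
    smul_eq_mul, inv_mul_eq_div]

section HalfLineIntegral

variable {E : Type*} [NormedAddCommGroup E] [InnerProductSpace ℝ E] [CompleteSpace E]
  {A : E →L[ℝ] E} {γ μ ε C t : ℝ} {g : ℝ → E}

theorem norm_exp_smul_apply_inv_smul_le (hA : ∀ x, ⟪A x, x⟫ ≤ -γ * ‖x‖ ^ 2) (hε : 0 < ε)
    {r : ℝ} (hr : r ≤ t) {x : E} (hx : ‖x‖ ≤ C * Real.exp (-(μ / ε * r))) :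
    ‖NormedSpace.exp (((t - r) / ε) • A) (ε⁻¹ • x)‖ ≤
      ε⁻¹ * C * Real.exp (-(γ / ε * t)) * Real.exp ((γ - μ) / ε * r) := by
  have hexp : Real.exp (-γ * ((t - r) / ε)) * Real.exp (-(μ / ε * r)) =
      Real.exp (-(γ / ε * t)) * Real.exp ((γ - μ) / ε * r) := by
    rw [← Real.exp_add, ← Real.exp_add]; ring_nf
  calc ‖NormedSpace.exp (((t - r) / ε) • A) (ε⁻¹ • x)‖
      ≤ Real.exp (-γ * ((t - r) / ε)) * (ε⁻¹ * ‖x‖) := by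
        rw [← norm_smul_of_nonneg (inv_nonneg.2 hε.le)]
        exact norm_exp_smul_apply_le_of_inner_le hA (div_nonneg (sub_nonneg.2 hr) hε.le) _
    _ ≤ Real.exp (-γ * ((t - r) / ε)) * (ε⁻¹ * (C * Real.exp (-(μ / ε * r)))) := by gcongr
    _ = ε⁻¹ * C * Real.exp (-(γ / ε * t)) * Real.exp ((γ - μ) / ε * r) := by
        linear_combination ε⁻¹ * C * hexp

theorem integrableOn_exp_smul_apply_inv_smul (hA : ∀ x, ⟪A x, x⟫ ≤ -γ * ‖x‖ ^ 2) (hε : 0 < ε)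
    (hμγ : μ < γ) (hg : AEStronglyMeasurable g (volume.restrict (Iic t)))
    (hbound : ∀ r ≤ t, ‖g r‖ ≤ C * Real.exp (-(μ / ε * r))) :
    IntegrableOn (fun r => NormedSpace.exp (((t - r) / ε) • A) (ε⁻¹ • g r)) (Iic t) := by
  have hk : 0 < (γ - μ) / ε := div_pos (sub_pos.2 hμγ) hε
  refine Integrable.mono' ((integrableOn_exp_mul_Iic hk t).const_mul
    (ε⁻¹ * C * Real.exp (-(γ / ε * t)))) ?_ ?_
  · exact isBoundedBilinearMap_apply.continuous.comp_aestronglyMeasurable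
      (((continuous_exp_smul A).comp ((continuous_const.sub continuous_id).div_const ε)
        |>.aestronglyMeasurable).prodMk (hg.const_smul ε⁻¹))
  · exact (ae_restrict_iff' measurableSet_Iic).2 (Eventually.of_forall fun r hr =>
      norm_exp_smul_apply_inv_smul_le hA hε hr (hbound r hr))

theorem norm_integral_exp_smul_apply_inv_smul_le (hA : ∀ x, ⟪A x, x⟫ ≤ -γ * ‖x‖ ^ 2)
    (hε : 0 < ε) (hμγ : μ < γ) (hbound : ∀ r ≤ t, ‖g r‖ ≤ C * Real.exp (-(μ / ε * r))) :
    ‖∫ r in Iic t, NormedSpace.exp (((t - r) / ε) • A) (ε⁻¹ • g r)‖ ≤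
      C / (γ - μ) * Real.exp (-(μ / ε * t)) := by
  have hk : 0 < (γ - μ) / ε := div_pos (sub_pos.2 hμγ) hε
  refine (norm_integral_le_of_norm_le ((integrableOn_exp_mul_Iic hk t).const_mul
    (ε⁻¹ * C * Real.exp (-(γ / ε * t))))
    ((ae_restrict_iff' measurableSet_Iic).2 (Eventually.of_forall fun r hr =>
      norm_exp_smul_apply_inv_smul_le hA hε hr (hbound r hr)))).trans_eq ?_
  have hexp : Real.exp (-(γ / ε * t)) * Real.exp ((γ - μ) / ε * t) = Real.exp (-(μ / ε * t)) := by
    rw [← Real.exp_add]; ring_nf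
  rw [integral_const_mul, integral_exp_mul_Iic hk, mul_div_assoc', mul_assoc _ (Real.exp _), hexp]
  field_simp

end HalfLineIntegral

section FiniteIntervalIntegral

variable {F : Type*} [NormedAddCommGroup F] [NormedSpace ℝ F]
  {B : F →L[ℝ] F} {γ c C t : ℝ} {h : ℝ → F}

theorem norm_exp_smul_sub_apply_le (hB : ∀ s ≤ 0, ‖NormedSpace.exp (s • B)‖ ≤ Real.exp (-γ * s))
    {r : ℝ} (hr : t ≤ r) {x : F} (hx : ‖x‖ ≤ C * Real.exp (-(c * r))) :
    ‖NormedSpace.exp ((t - r) • B) x‖ ≤ C * Real.exp (-γ * t) * Real.exp ((γ - c) * r) := by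
  calc ‖NormedSpace.exp ((t - r) • B) x‖
      ≤ Real.exp (-γ * (t - r)) * (C * Real.exp (-(c * r))) :=
        (ContinuousLinearMap.le_opNorm _ _).trans
          (mul_le_mul (hB _ (sub_nonpos.2 hr)) hx (norm_nonneg _) (Real.exp_pos _).le)
    _ = C * Real.exp (-γ * t) * Real.exp ((γ - c) * r) := by
        rw [mul_left_comm, mul_assoc, ← Real.exp_add, ← Real.exp_add]; ring_nf

theorem intervalIntegrable_exp_smul_sub_apply [CompleteSpace F]
    (hB : ∀ s ≤ 0, ‖NormedSpace.exp (s • B)‖ ≤ Real.exp (-γ * s)) (ht : t ≤ 0)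
    (hh : AEStronglyMeasurable h (volume.restrict (Ioc t 0)))
    (hbound : ∀ r ∈ Ioc t 0, ‖h r‖ ≤ C * Real.exp (-(c * r))) :
    IntervalIntegrable (fun r => NormedSpace.exp ((t - r) • B) (h r)) volume t 0 := by
  rw [intervalIntegrable_iff_integrableOn_Ioc_of_le ht]
  have hexp : Continuous fun r => Real.exp ((γ - c) * r) := by fun_prop
  refine Integrable.mono' ((hexp.integrableOn_Icc.mono_set Ioc_subset_Icc_self).const_mul
    (C * Real.exp (-γ * t))) ?_ ?_
  · exact isBoundedBilinearMap_apply.continuous.comp_aestronglyMeasurable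
      (((continuous_exp_smul B).comp (continuous_const.sub continuous_id)
        |>.aestronglyMeasurable).prodMk hh)
  · exact (ae_restrict_iff' measurableSet_Ioc).2 (Eventually.of_forall fun r hr =>
      norm_exp_smul_sub_apply_le hB hr.1.le (hbound r hr))

theorem norm_intervalIntegral_exp_smul_sub_apply_le [CompleteSpace F]
    (hB : ∀ s ≤ 0, ‖NormedSpace.exp (s • B)‖ ≤ Real.exp (-γ * s)) (hγc : γ < c) (ht : t ≤ 0)
    (hC : 0 ≤ C) (hbound : ∀ r ∈ Ioc t 0, ‖h r‖ ≤ C * Real.exp (-(c * r))) :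
    ‖∫ r in t..0, NormedSpace.exp ((t - r) • B) (h r)‖ ≤ C / (c - γ) * Real.exp (-(c * t)) := by
  have hk : γ - c ≠ 0 := (sub_neg.2 hγc).ne
  refine (intervalIntegral.norm_integral_le_of_norm_le ht (Eventually.of_forall fun r hr =>
    norm_exp_smul_sub_apply_le hB hr.1.le (hbound r hr))
    ((by fun_prop : Continuous fun r => Real.exp ((γ - c) * r)).intervalIntegrable t 0
      |>.const_mul _)).trans ?_
  rw [intervalIntegral.integral_const_mul, integral_exp_mul_of_ne_zero hk, mul_zero,
    Real.exp_zero]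
  have hcγ : 0 < c - γ := sub_pos.2 hγc
  have hexp : Real.exp (-γ * t) * Real.exp ((γ - c) * t) = Real.exp (-(c * t)) := by
    rw [← Real.exp_add]; ring_nf
  calc C * Real.exp (-γ * t) * ((1 - Real.exp ((γ - c) * t)) / (γ - c))
      = C / (c - γ) * (Real.exp (-γ * t) * Real.exp ((γ - c) * t)) -
          C / (c - γ) * Real.exp (-γ * t) := by
        field_simp; ring
    _ ≤ C / (c - γ) * Real.exp (-(c * t)) := by
        rw [hexp]; linarith [show 0 ≤ C / (c - γ) * Real.exp (-γ * t) by positivity]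

end FiniteIntervalIntegral

theorem Real.exp_mul_le_iff_le_mul_exp_neg {x y S : ℝ} :
    Real.exp x * y ≤ S ↔ y ≤ S * Real.exp (-x) := by
  rw [Real.exp_neg, ← div_eq_mul_inv, le_div_iff₀ (Real.exp_pos x), mul_comm]

section Forcing

variable {E F G : Type*} [NormedAddCommGroup E] [NormedAddCommGroup F] [NormedAddCommGroup G]
  {f : E × F → G} {L : ℝ}

theorem continuous_of_norm_sub_le
    (hf : ∀ x₁ y₁ x₂ y₂, ‖f (x₁, y₁) - f (x₂, y₂)‖ ≤ L * (‖x₁ - x₂‖ + ‖y₁ - y₂‖)) :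
    Continuous f := by
  refine continuous_iff_continuousAt.2 fun p => tendsto_iff_norm_sub_tendsto_zero.2 <|
    squeeze_zero (fun _ => norm_nonneg _) (fun q => hf q.1 q.2 p.1 p.2) ?_
  have : Continuous fun q : E × F => L * (‖q.1 - p.1‖ + ‖q.2 - p.2‖) := by fun_prop
  simpa using this.tendsto p

theorem norm_sub_comp_add_le_of_weighted_le
    (hf : ∀ x₁ y₁ x₂ y₂, ‖f (x₁, y₁) - f (x₂, y₂)‖ ≤ L * (‖x₁ - x₂‖ + ‖y₁ - y₂‖)) (hL : 0 ≤ L)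
    {x₁ x₂ a : ℝ → E} {y₁ y₂ b : ℝ → F} {c S : ℝ}
    (hS : ∀ r ≤ 0, Real.exp (c * r) * (‖x₁ r - x₂ r‖ + ‖y₁ r - y₂ r‖) ≤ S) {r : ℝ} (hr : r ≤ 0) :
    ‖f (x₁ r + a r, y₁ r + b r) - f (x₂ r + a r, y₂ r + b r)‖ ≤ L * S * Real.exp (-(c * r)) := by
  have h := hf (x₁ r + a r) (y₁ r + b r) (x₂ r + a r) (y₂ r + b r)
  rw [add_sub_add_right_eq_sub, add_sub_add_right_eq_sub] at h
  rw [mul_assoc]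
  exact h.trans (mul_le_mul_of_nonneg_left (Real.exp_mul_le_iff_le_mul_exp_neg.1 (hS r hr)) hL)

theorem aestronglyMeasurable_comp_add_add [MeasurableSpace E] [BorelSpace E]
    [SecondCountableTopology E] [MeasurableSpace F] [BorelSpace F] [SecondCountableTopology F]
    {x : ℝ → E} {y : ℝ → F} {a : ℝ → E} {b : ℝ → F} {s : Set ℝ}
    (hx : ContinuousOn x (Iic 0)) (hy : ContinuousOn y (Iic 0)) (ha : Measurable a)
    (hb : Measurable b) (hf : Continuous f) (hs : s ⊆ Iic 0) :
    AEStronglyMeasurable (fun r => f (x r + a r, y r + b r)) (volume.restrict s) := by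
  have hmono : volume.restrict s ≤ volume.restrict (Iic (0 : ℝ)) :=
    Measure.restrict_mono hs le_rfl
  exact hf.comp_aestronglyMeasurable
    ((((hx.aestronglyMeasurable measurableSet_Iic).mono_measure hmono).add
        ha.aestronglyMeasurable).prodMk
      (((hy.aestronglyMeasurable measurableSet_Iic).mono_measure hmono).add
        hb.aestronglyMeasurable))

end Forcing

namespace IsStarSolution

variable {n m : ℕ} {ε μ γ L S : ℝ}
  {A : EuclideanSpace ℝ (Fin n) →L[ℝ] EuclideanSpace ℝ (Fin n)}
  {B : EuclideanSpace ℝ (Fin m) →L[ℝ] EuclideanSpace ℝ (Fin m)}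
  {U : EuclideanSpace ℝ (Fin n) × EuclideanSpace ℝ (Fin m) → EuclideanSpace ℝ (Fin n)}
  {V : EuclideanSpace ℝ (Fin n) × EuclideanSpace ℝ (Fin m) → EuclideanSpace ℝ (Fin m)}
  {a : ℝ → EuclideanSpace ℝ (Fin n)} {b : ℝ → EuclideanSpace ℝ (Fin m)}
  {w₁ w₂ : EuclideanSpace ℝ (Fin m)} {uh₁ uh₂ : ℝ → EuclideanSpace ℝ (Fin n)}
  {vh₁ vh₂ : ℝ → EuclideanSpace ℝ (Fin m)}

theorem bddAbove_weighted_dist (hsol₁ : IsStarSolution n m ε μ A B U V a b w₁ uh₁ vh₁)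
    (hsol₂ : IsStarSolution n m ε μ A B U V a b w₂ uh₂ vh₂) :
    BddAbove ((fun t => Real.exp (μ / ε * t) * (‖uh₁ t - uh₂ t‖ + ‖vh₁ t - vh₂ t‖)) '' Iic 0) := by
  obtain ⟨K₁, hK₁⟩ := hsol₁.2.2.1
  obtain ⟨K₂, hK₂⟩ := hsol₂.2.2.1
  refine ⟨K₁ + K₂, ?_⟩
  rintro _ ⟨t, ht, rfl⟩
  calc Real.exp (μ / ε * t) * (‖uh₁ t - uh₂ t‖ + ‖vh₁ t - vh₂ t‖)
      ≤ Real.exp (μ / ε * t) * (‖uh₁ t‖ + ‖vh₁ t‖) +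
          Real.exp (μ / ε * t) * (‖uh₂ t‖ + ‖vh₂ t‖) := by
        rw [← mul_add]
        refine mul_le_mul_of_nonneg_left ?_ (Real.exp_pos _).le
        linarith [norm_sub_le (uh₁ t) (uh₂ t), norm_sub_le (vh₁ t) (vh₂ t)]
    _ ≤ K₁ + K₂ := add_le_add (hK₁ t ht) (hK₂ t ht)

theorem weighted_norm_sub_fst_le (hsol₁ : IsStarSolution n m ε μ A B U V a b w₁ uh₁ vh₁)
    (hsol₂ : IsStarSolution n m ε μ A B U V a b w₂ uh₂ vh₂)
    (hA : ∀ x, ⟪A x, x⟫ ≤ -γ * ‖x‖ ^ 2) (hγ : 0 < γ) (hμγ : μ < γ) (hε : 0 < ε) (hL : 0 ≤ L)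
    (hUL : ∀ x₁ y₁ x₂ y₂, ‖U (x₁, y₁) - U (x₂, y₂)‖ ≤ L * (‖x₁ - x₂‖ + ‖y₁ - y₂‖))
    {MU : ℝ} (hMU : ∀ z, ‖U z‖ ≤ MU) (ha : Measurable a) (hb : Measurable b)
    (hS : ∀ r ≤ 0, Real.exp (μ / ε * r) * (‖uh₁ r - uh₂ r‖ + ‖vh₁ r - vh₂ r‖) ≤ S)
    {t : ℝ} (ht : t ≤ 0) :
    Real.exp (μ / ε * t) * ‖uh₁ t - uh₂ t‖ ≤ L / (γ - μ) * S := by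
  -- Boundedness of `U` makes each integral in (★) that of an integrable function, so that
  -- the difference of the two Bochner integrals is the integral of the difference.
  have hforcing {uh vh w} (hsol : IsStarSolution n m ε μ A B U V a b w uh vh) :=
    integrableOn_exp_smul_apply_inv_smul hA hε (μ := 0) hγ
      (aestronglyMeasurable_comp_add_add hsol.1 hsol.2.1 ha hb (continuous_of_norm_sub_le hUL)
        (Iic_subset_Iic.2 ht))
      (fun r _ => by simpa using hMU (uh r + a r, vh r + b r))
  rw [Real.exp_mul_le_iff_le_mul_exp_neg, hsol₁.2.2.2.1 t ht, hsol₂.2.2.2.1 t ht,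
    ← integral_sub (hforcing hsol₁) (hforcing hsol₂)]
  simp_rw [← map_sub, ← smul_sub]
  refine (norm_integral_exp_smul_apply_inv_smul_le hA hε hμγ (C := L * S) fun r hr =>
    norm_sub_comp_add_le_of_weighted_le hUL hL hS (hr.trans ht)).trans_eq ?_
  ring

theorem weighted_norm_sub_snd_le (hsol₁ : IsStarSolution n m ε μ A B U V a b w₁ uh₁ vh₁)
    (hsol₂ : IsStarSolution n m ε μ A B U V a b w₂ uh₂ vh₂)
    (hB : ∀ s ≤ 0, ‖NormedSpace.exp (s • B)‖ ≤ Real.exp (-γ * s)) (hε : 0 < ε)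
    (hεγ : ε * γ < μ) (hL : 0 ≤ L) (hS₀ : 0 ≤ S)
    (hVL : ∀ x₁ y₁ x₂ y₂, ‖V (x₁, y₁) - V (x₂, y₂)‖ ≤ L * (‖x₁ - x₂‖ + ‖y₁ - y₂‖))
    {MV : ℝ} (hMV : ∀ z, ‖V z‖ ≤ MV) (ha : Measurable a) (hb : Measurable b)
    (hS : ∀ r ≤ 0, Real.exp (μ / ε * r) * (‖uh₁ r - uh₂ r‖ + ‖vh₁ r - vh₂ r‖) ≤ S)
    {t : ℝ} (ht : t ≤ 0) :
    Real.exp (μ / ε * t) * ‖vh₁ t - vh₂ t‖ ≤ ‖w₁ - w₂‖ + ε * L / (μ - ε * γ) * S := by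
  have hγc : γ < μ / ε := by rwa [lt_div_iff₀ hε, mul_comm]
  have hforcing {uh vh w} (hsol : IsStarSolution n m ε μ A B U V a b w uh vh) :=
    intervalIntegrable_exp_smul_sub_apply hB ht (c := 0)
      (aestronglyMeasurable_comp_add_add hsol.1 hsol.2.1 ha hb (continuous_of_norm_sub_le hVL)
        fun _ hr => hr.2)
      (fun r _ => by simpa using hMV (uh r + a r, vh r + b r))
  have hdiff : vh₁ t - vh₂ t = NormedSpace.exp (t • B) (w₁ - w₂) -
      ∫ r in t..0, NormedSpace.exp ((t - r) • B)
        (V (uh₁ r + a r, vh₁ r + b r) - V (uh₂ r + a r, vh₂ r + b r)) := by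
    simp_rw [hsol₁.2.2.2.2 t ht, hsol₂.2.2.2.2 t ht, map_sub,
      intervalIntegral.integral_sub (hforcing hsol₁) (hforcing hsol₂)]
    abel
  have hinitial : ‖NormedSpace.exp (t • B) (w₁ - w₂)‖ ≤ ‖w₁ - w₂‖ * Real.exp (-(μ / ε * t)) := by
    refine (ContinuousLinearMap.le_opNorm _ _).trans ?_
    rw [mul_comm]
    refine mul_le_mul_of_nonneg_left ((hB t ht).trans (Real.exp_le_exp.2 ?_)) (norm_nonneg _)
    nlinarith
  have hintegral := norm_intervalIntegral_exp_smul_sub_apply_le hB hγc ht (mul_nonneg hL hS₀)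
    fun r hr => norm_sub_comp_add_le_of_weighted_le (a := a) (b := b) hVL hL hS hr.2
  rw [Real.exp_mul_le_iff_le_mul_exp_neg, hdiff]
  refine (norm_sub_le _ _).trans ((add_le_add hinitial hintegral).trans_eq ?_)
  have : μ - ε * γ ≠ 0 := (sub_pos.2 hεγ).ne'
  field_simp

end IsStarSolution

theorem graph_map_lipschitz_general (n m : ℕ)
    (γ₁ γ₂ L MU MV μ ε : ℝ)
    (A : EuclideanSpace ℝ (Fin n) →L[ℝ] EuclideanSpace ℝ (Fin n))
    (B : EuclideanSpace ℝ (Fin m) →L[ℝ] EuclideanSpace ℝ (Fin m))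
    (U : EuclideanSpace ℝ (Fin n) × EuclideanSpace ℝ (Fin m) → EuclideanSpace ℝ (Fin n))
    (V : EuclideanSpace ℝ (Fin n) × EuclideanSpace ℝ (Fin m) → EuclideanSpace ℝ (Fin m))
    -- (H1)
    (hγ₁ : 0 < γ₁)
    (hA : ∀ x : EuclideanSpace ℝ (Fin n), ⟪A x, x⟫ ≤ -γ₁ * ‖x‖ ^ 2)
    -- (H2)
    (hB₁ : ∀ t : ℝ, t ≤ 0 → ‖NormedSpace.exp (t • B)‖ ≤ Real.exp (-γ₂ * t))
    -- (H3)
    (hL : 0 < L)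
    (hUL : ∀ x₁ y₁ x₂ y₂, ‖U (x₁, y₁) - U (x₂, y₂)‖ ≤ L * (‖x₁ - x₂‖ + ‖y₁ - y₂‖))
    (hVL : ∀ x₁ y₁ x₂ y₂, ‖V (x₁, y₁) - V (x₂, y₂)‖ ≤ L * (‖x₁ - x₂‖ + ‖y₁ - y₂‖))
    -- (H5)
    (hMU : ∀ z, ‖U z‖ ≤ MU) (hMV : ∀ z, ‖V z‖ ≤ MV)
    -- scales: μ > 0, γ₁ - μ > L, ε γ₂ < μ, κ_ε < 1
    (hμL : L < γ₁ - μ) (hε : 0 < ε) (hεμ : ε * γ₂ < μ)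
    (hκ : L / (γ₁ - μ) + ε * L / (μ - ε * γ₂) < 1)
    -- input paths
    (a : ℝ → EuclideanSpace ℝ (Fin n)) (b : ℝ → EuclideanSpace ℝ (Fin m))
    (ha : Measurable a) (hb : Measurable b)
    -- two anchors and the corresponding solutions of (★)
    (w₁ w₂ : EuclideanSpace ℝ (Fin m))
    (uh₁ uh₂ : ℝ → EuclideanSpace ℝ (Fin n)) (vh₁ vh₂ : ℝ → EuclideanSpace ℝ (Fin m))
    (hsol₁ : IsStarSolution n m ε μ A B U V a b w₁ uh₁ vh₁)
    (hsol₂ : IsStarSolution n m ε μ A B U V a b w₂ uh₂ vh₂) :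
    ‖uh₁ 0 - uh₂ 0‖ ≤
      L / ((γ₁ - μ) * (1 - (L / (γ₁ - μ) + ε * L / (μ - ε * γ₂)))) * ‖w₁ - w₂‖ := by
  set κ := L / (γ₁ - μ) + ε * L / (μ - ε * γ₂)
  set d := fun t => Real.exp (μ / ε * t) * (‖uh₁ t - uh₂ t‖ + ‖vh₁ t - vh₂ t‖)
  set S := sSup (d '' Iic 0)
  have hdS : ∀ t ≤ 0, d t ≤ S := fun t ht =>
    le_csSup (hsol₁.bddAbove_weighted_dist hsol₂) (mem_image_of_mem d ht)
  have hS₀ : 0 ≤ S := (by positivity : 0 ≤ d 0).trans (hdS 0 le_rfl)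
  have hu {t} (ht : t ≤ 0) := hsol₁.weighted_norm_sub_fst_le hsol₂ hA hγ₁ (by linarith) hε
    hL.le hUL hMU ha hb hdS ht
  have hv {t} (ht : t ≤ 0) := hsol₁.weighted_norm_sub_snd_le hsol₂ hB₁ hε hεμ hL.le hS₀ hVL
    hMV ha hb hdS ht
  have hSκ : S ≤ ‖w₁ - w₂‖ + κ * S := csSup_le (nonempty_Iic.image d) <| by
    rintro _ ⟨t, ht, rfl⟩
    linarith [hu ht, hv ht, mul_add (Real.exp (μ / ε * t)) ‖uh₁ t - uh₂ t‖ ‖vh₁ t - vh₂ t‖]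
  have hγμ : 0 < γ₁ - μ := by linarith
  calc ‖uh₁ 0 - uh₂ 0‖ ≤ L / (γ₁ - μ) * S := by simpa using hu le_rfl
    _ ≤ L / (γ₁ - μ) * (‖w₁ - w₂‖ / (1 - κ)) := by
        gcongr
        rw [le_div_iff₀ (by linarith)]
        linarith
    _ = L / ((γ₁ - μ) * (1 - κ)) * ‖w₁ - w₂‖ := by
        rw [div_mul_div_comm, div_mul_eq_mul_div]

/-- Under (H1)–(H5), `γ₁ - μ > L`, `ε γ₂ < μ`, `κ_ε < 1`, the graph map
`F^ε` of the invariant manifold (sending the anchor `v̄₀` to the value at time `0` of the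
`ℝⁿ`-component of the unique solution of (★) with anchor `v̄₀`) is globally Lipschitz:
`‖F^ε(v̄₀¹) - F^ε(v̄₀²)‖ ≤ [L/((γ₁-μ)(1-κ_ε))] ‖v̄₀¹ - v̄₀²‖`. -/
theorem graph_map_lipschitz (n m : ℕ)
    (γ₁ γ₂ γ₃ L MU MV μ ε : ℝ)
    (A : EuclideanSpace ℝ (Fin n) →L[ℝ] EuclideanSpace ℝ (Fin n))
    (B : EuclideanSpace ℝ (Fin m) →L[ℝ] EuclideanSpace ℝ (Fin m))
    (U : EuclideanSpace ℝ (Fin n) × EuclideanSpace ℝ (Fin m) → EuclideanSpace ℝ (Fin n))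
    (V : EuclideanSpace ℝ (Fin n) × EuclideanSpace ℝ (Fin m) → EuclideanSpace ℝ (Fin m))
    -- (H1)
    (hγ₁ : 0 < γ₁)
    (hA : ∀ x : EuclideanSpace ℝ (Fin n), ⟪A x, x⟫ ≤ -γ₁ * ‖x‖ ^ 2)
    -- (H2)
    (hγ₂ : 0 < γ₂) (hγ₃ : 0 < γ₃)
    (hB₁ : ∀ t : ℝ, t ≤ 0 → ‖NormedSpace.exp (t • B)‖ ≤ Real.exp (-γ₂ * t))
    (hB₂ : ∀ t : ℝ, 0 < t → ‖NormedSpace.exp (t • B)‖ ≤ Real.exp (-γ₃ * t))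
    -- (H3)
    (hL : 0 < L)
    (hUL : ∀ x₁ y₁ x₂ y₂, ‖U (x₁, y₁) - U (x₂, y₂)‖ ≤ L * (‖x₁ - x₂‖ + ‖y₁ - y₂‖))
    (hVL : ∀ x₁ y₁ x₂ y₂, ‖V (x₁, y₁) - V (x₂, y₂)‖ ≤ L * (‖x₁ - x₂‖ + ‖y₁ - y₂‖))
    -- (H5)
    (hMU : ∀ z, ‖U z‖ ≤ MU) (hMV : ∀ z, ‖V z‖ ≤ MV)
    -- scales: μ > 0, γ₁ - μ > L, ε γ₂ < μ, κ_ε < 1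
    (hμ : 0 < μ) (hμL : L < γ₁ - μ) (hε : 0 < ε) (hεμ : ε * γ₂ < μ)
    (hκ : L / (γ₁ - μ) + ε * L / (μ - ε * γ₂) < 1)
    -- input paths
    (a : ℝ → EuclideanSpace ℝ (Fin n)) (b : ℝ → EuclideanSpace ℝ (Fin m))
    (ha : Measurable a) (hb : Measurable b)
    -- two anchors and the corresponding solutions of (★)
    (w₁ w₂ : EuclideanSpace ℝ (Fin m))
    (uh₁ uh₂ : ℝ → EuclideanSpace ℝ (Fin n)) (vh₁ vh₂ : ℝ → EuclideanSpace ℝ (Fin m))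
    (hsol₁ : IsStarSolution n m ε μ A B U V a b w₁ uh₁ vh₁)
    (hsol₂ : IsStarSolution n m ε μ A B U V a b w₂ uh₂ vh₂) :
    ‖uh₁ 0 - uh₂ 0‖ ≤
      L / ((γ₁ - μ) * (1 - (L / (γ₁ - μ) + ε * L / (μ - ε * γ₂)))) * ‖w₁ - w₂‖ :=
  graph_map_lipschitz_general n m γ₁ γ₂ L MU MV μ ε A B U V hγ₁ hA hB₁ hL hUL hVL hMU hMV hμL hε hεμ
    hκ a b ha hb w₁ w₂ uh₁ uh₂ vh₁ vh₂ hsol₁ hsol₂
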